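/- Let f be differentiable on an open interval containing [a,b] (a < b) with f' integrable, q > 1 with 1/p + 1/q = 1, and suppose |f'|^q is quasi-convex on [a,b]. Then the Simpson-type inequality holds: |(1/6)[f(a) + 4 f((a+b)/2) + f(b)] − (1/(b−a)) ∫_a^b f(x) dx| ≤ ((b−a)/12) ((1 + 2^(p+1))/(3(p+1)))^(1/p) [ (max{|f'((a+b)/2)|^q, |f'(a)|^q})^(1/q) + (max{|f'((a+b)/2)|^q, |f'(b)|^q})^(1/q) ]. -/

import Mathlib

/-!
Integrating by parts against the Simpson kernel `x - (5a+b)/6` on `[a, m]` and `x - (a+5b)/6`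
on `[m, b]` (`m` the midpoint) writes the Simpson error as `1/(b-a)` times `∫ kernel * f'`.
Quasi-convexity of `|f'|^q` bounds `|f'|` on `[a, m]` by `max(|f' m|^q, |f' a|^q)^(1/q)` and on
`[m, b]` by `max(|f' m|^q, |f' b|^q)^(1/q)`, and each kernel has `L¹` norm `5(b-a)²/72`. This gives
the inequality with `5/6` in place of `((1 + 2^(p+1))/(3(p+1)))^(1/p)`; the latter is `3` times the
`Lᵖ` norm of `t ↦ |t - 1/3|` on `[0, 1]`, hence at least `3` times its `L¹` norm, which is `5/6`.
-/

open MeasureTheory Set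

theorem QuasiconvexOn.le_max_of_mem_segment {𝕜 E β : Type*} [Semiring 𝕜] [PartialOrder 𝕜]
    [AddCommMonoid E] [LinearOrder β] [SMul 𝕜 E] {s : Set E} {f : E → β}
    (hf : QuasiconvexOn 𝕜 s f) {x y z : E} (hx : x ∈ s) (hy : y ∈ s) (hz : z ∈ segment 𝕜 x y) :
    f z ≤ max (f x) (f y) :=
  ((hf _).segment_subset ⟨hx, le_max_left _ _⟩ ⟨hy, le_max_right _ _⟩ hz).2

theorem abs_le_max_rpow_of_quasiconvexOn {g : ℝ → ℝ} {s : Set ℝ} {q : ℝ} (hq : 0 < q)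
    (hg : QuasiconvexOn ℝ s fun x => |g x| ^ q) {x y z : ℝ} (hx : x ∈ s) (hy : y ∈ s)
    (hz : z ∈ segment ℝ x y) :
    |g z| ≤ (max (|g x| ^ q) (|g y| ^ q)) ^ (1 / q) := by
  rw [one_div, Real.le_rpow_inv_iff_of_pos (abs_nonneg _)
    ((Real.rpow_nonneg (abs_nonneg _) _).trans (le_max_left _ _)) hq]
  exact hg.le_max_of_mem_segment hx hy hz

theorem integral_abs_sub {u v w : ℝ} (huw : u ≤ w) (hwv : w ≤ v) :
    ∫ x in u..v, |x - w| = (w - u) ^ 2 / 2 + (v - w) ^ 2 / 2 := by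
  have hc : Continuous fun x : ℝ => |x - w| := by fun_prop
  rw [← intervalIntegral.integral_add_adjacent_intervals (hc.intervalIntegrable u w)
    (hc.intervalIntegrable w v)]
  have hleft : ∫ x in u..w, |x - w| = ∫ x in u..w, (w - x) := by
    refine intervalIntegral.integral_congr fun x hx => ?_
    rw [uIcc_of_le huw] at hx
    simp only [abs_of_nonpos (sub_nonpos.2 hx.2), neg_sub]
  have hright : ∫ x in w..v, |x - w| = ∫ x in w..v, (x - w) := by
    refine intervalIntegral.integral_congr fun x hx => ?_
    rw [uIcc_of_le hwv] at hx
    simp only [abs_of_nonneg (sub_nonneg.2 hx.1)]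
  rw [hleft, hright, intervalIntegral.integral_sub intervalIntegrable_const
    intervalIntegral.intervalIntegrable_id, intervalIntegral.integral_sub
    intervalIntegral.intervalIntegrable_id intervalIntegrable_const, integral_id, integral_id,
    intervalIntegral.integral_const, intervalIntegral.integral_const, smul_eq_mul, smul_eq_mul]
  ring

theorem integral_sub_mul_deriv {f f' : ℝ → ℝ} {u v : ℝ} (w : ℝ)
    (hf : ∀ x ∈ uIcc u v, HasDerivAt f (f' x) x) (hf' : IntervalIntegrable f' volume u v) :
    ∫ x in u..v, (x - w) * f' x = (v - w) * f v - (u - w) * f u - ∫ x in u..v, f x := by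
  simpa using intervalIntegral.integral_mul_deriv_eq_deriv_mul
    (fun x _ => (hasDerivAt_id x).sub_const w) hf intervalIntegrable_const hf'

theorem abs_integral_sub_mul_le {g : ℝ → ℝ} {u v w M : ℝ} (huw : u ≤ w) (hwv : w ≤ v)
    (hg : IntervalIntegrable g volume u v) (hM : ∀ x ∈ Icc u v, |g x| ≤ M) :
    |∫ x in u..v, (x - w) * g x| ≤ M * ((w - u) ^ 2 / 2 + (v - w) ^ 2 / 2) := by
  have huv : u ≤ v := huw.trans hwv
  have hk : Continuous fun x : ℝ => x - w := by fun_prop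
  calc |∫ x in u..v, (x - w) * g x|
      ≤ ∫ x in u..v, |(x - w) * g x| := intervalIntegral.abs_integral_le_integral_abs huv
    _ ≤ ∫ x in u..v, |x - w| * M := by
        refine intervalIntegral.integral_mono_on huv (hg.continuousOn_mul hk.continuousOn).abs
          ((hk.abs.intervalIntegrable u v).mul_const M) fun x hx => ?_
        rw [abs_mul]
        exact mul_le_mul_of_nonneg_left (hM x hx) (abs_nonneg _)
    _ = M * ((w - u) ^ 2 / 2 + (v - w) ^ 2 / 2) := by
        rw [intervalIntegral.integral_mul_const, integral_abs_sub huw hwv, mul_comm]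

section Simpson

variable {f f' : ℝ → ℝ} {a b : ℝ}

theorem simpson_error_eq (hab : a < b) (hf : ∀ x ∈ Icc a b, HasDerivAt f (f' x) x)
    (hf' : IntervalIntegrable f' volume a b) :
    1 / 6 * (f a + 4 * f ((a + b) / 2) + f b) - 1 / (b - a) * ∫ x in a..b, f x =
      1 / (b - a) * ((∫ x in a..(a + b) / 2, (x - (5 * a + b) / 6) * f' x) +
        ∫ x in (a + b) / 2..b, (x - (a + 5 * b) / 6) * f' x) := by
  have ham : a ≤ (a + b) / 2 := by linarith
  have hmb : (a + b) / 2 ≤ b := by linarith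
  have hsub₁ : uIcc a ((a + b) / 2) ⊆ Icc a b := by
    rw [uIcc_of_le ham]; exact Icc_subset_Icc le_rfl hmb
  have hsub₂ : uIcc ((a + b) / 2) b ⊆ Icc a b := by
    rw [uIcc_of_le hmb]; exact Icc_subset_Icc ham le_rfl
  have hfc : ContinuousOn f (Icc a b) := fun x hx => (hf x hx).continuousAt.continuousWithinAt
  rw [integral_sub_mul_deriv _ (fun x hx => hf x (hsub₁ hx)) (hf'.mono_set (by simpa [hab.le])),
    integral_sub_mul_deriv _ (fun x hx => hf x (hsub₂ hx)) (hf'.mono_set (by simpa [hab.le])),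
    ← intervalIntegral.integral_add_adjacent_intervals
      ((hfc.mono hsub₁).intervalIntegrable) ((hfc.mono hsub₂).intervalIntegrable)]
  field_simp [(sub_pos.2 hab).ne']
  ring

theorem abs_simpson_error_le (hab : a < b) (hf : ∀ x ∈ Icc a b, HasDerivAt f (f' x) x)
    (hf' : IntervalIntegrable f' volume a b) {M₁ M₂ : ℝ}
    (hM₁ : ∀ x ∈ Icc a ((a + b) / 2), |f' x| ≤ M₁) (hM₂ : ∀ x ∈ Icc ((a + b) / 2) b, |f' x| ≤ M₂) :
    |1 / 6 * (f a + 4 * f ((a + b) / 2) + f b) - 1 / (b - a) * ∫ x in a..b, f x| ≤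
      (b - a) / 12 * (5 / 6) * (M₁ + M₂) := by
  have ham : a ≤ (a + b) / 2 := by linarith
  have hmb : (a + b) / 2 ≤ b := by linarith
  have hbound₁ := abs_integral_sub_mul_le (w := (5 * a + b) / 6) (by linarith) (by linarith)
    (hf'.mono_set (by simpa [hab.le, ham] using Icc_subset_Icc le_rfl hmb)) hM₁
  have hbound₂ := abs_integral_sub_mul_le (w := (a + 5 * b) / 6) (by linarith) (by linarith)
    (hf'.mono_set (by simpa [hab.le, hmb] using Icc_subset_Icc ham le_rfl)) hM₂
  rw [simpson_error_eq hab hf hf', abs_mul, abs_of_pos (one_div_pos.2 (sub_pos.2 hab))]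
  calc 1 / (b - a) * |(∫ x in a..(a + b) / 2, (x - (5 * a + b) / 6) * f' x) +
        ∫ x in (a + b) / 2..b, (x - (a + 5 * b) / 6) * f' x|
      ≤ 1 / (b - a) * (M₁ * (5 * (b - a) ^ 2 / 72) + M₂ * (5 * (b - a) ^ 2 / 72)) := by
        gcongr
        refine (abs_add_le _ _).trans (add_le_add (hbound₁.trans_eq ?_) (hbound₂.trans_eq ?_))
        all_goals ring
    _ = (b - a) / 12 * (5 / 6) * (M₁ + M₂) := by
        field_simp [(sub_pos.2 hab).ne']
        ring

end Simpson

theorem five_sixths_le_simpson_holder_const {p : ℝ} (hp : 1 ≤ p) :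
    (5 / 6 : ℝ) ≤ ((1 + 2 ^ (p + 1)) / (3 * (p + 1))) ^ (1 / p) := by
  have hp₀ : 0 < p := by linarith
  -- `2^(p+1) = 4 exp((p-1) log 2) ≥ 4 (1 + (p-1) log 2)` and `log 2 > 5/8`
  have hpow : (5 / 2 : ℝ) * (p + 1) ≤ 1 + 2 ^ (p + 1) := by
    have hexp : (2 : ℝ) ^ (p + 1) = 4 * Real.exp ((p - 1) * Real.log 2) := by
      rw [Real.rpow_def_of_pos two_pos,
        show Real.log 2 * (p + 1) = Real.log 2 + Real.log 2 + (p - 1) * Real.log 2 by ring,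
        Real.exp_add, Real.exp_add, Real.exp_log two_pos]
      ring
    have hlog : (5 / 8 : ℝ) * (p - 1) ≤ (p - 1) * Real.log 2 := by
      nlinarith [Real.log_two_gt_d9]
    rw [hexp]
    linarith [Real.add_one_le_exp ((p - 1) * Real.log 2)]
  have hbase : (5 / 6 : ℝ) ^ p ≤ (1 + 2 ^ (p + 1)) / (3 * (p + 1)) := by
    calc (5 / 6 : ℝ) ^ p ≤ (5 / 6 : ℝ) ^ (1 : ℝ) :=
          Real.rpow_le_rpow_of_exponent_ge (by norm_num) (by norm_num) hp
      _ ≤ (1 + 2 ^ (p + 1)) / (3 * (p + 1)) := by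
          rw [Real.rpow_one, le_div_iff₀ (by positivity)]
          linarith
  calc (5 / 6 : ℝ) = ((5 / 6 : ℝ) ^ p) ^ (1 / p) := by
        rw [← Real.rpow_mul (by norm_num), mul_one_div_cancel hp₀.ne', Real.rpow_one]
    _ ≤ ((1 + 2 ^ (p + 1)) / (3 * (p + 1))) ^ (1 / p) := by gcongr

theorem stmt_10 (f f' : ℝ → ℝ) (a b p q c d : ℝ) (hab : a < b)
    (hq : 1 < q) (hpq : 1 / p + 1 / q = 1)
    (hca : c < a) (hbd : b < d)
    (hf : ∀ x ∈ Set.Ioo c d, HasDerivAt f (f' x) x)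
    (hint : IntervalIntegrable f' volume a b)
    (hqc : ∀ x ∈ Set.Icc a b, ∀ y ∈ Set.Icc a b, ∀ α ∈ Set.Icc (0:ℝ) 1,
      |f' (α * x + (1 - α) * y)| ^ q ≤ max (|f' x| ^ q) (|f' y| ^ q)) :
    |(1 / 6) * (f a + 4 * f ((a + b) / 2) + f b) - (1 / (b - a)) * ∫ x in a..b, f x|
      ≤ (b - a) / 12 * ((1 + 2 ^ (p + 1)) / (3 * (p + 1))) ^ (1 / p) *
          ((max (|f' ((a + b) / 2)| ^ q) (|f' a| ^ q)) ^ (1 / q)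
            + (max (|f' ((a + b) / 2)| ^ q) (|f' b| ^ q)) ^ (1 / q)) := by
  have hq₀ : 0 < q := by linarith
  have hp : 1 < p := (Real.holderConjugate_iff.2
    ⟨hq, by rwa [one_div, one_div, add_comm] at hpq⟩).symm.lt
  have hquasi : QuasiconvexOn ℝ (Icc a b) fun x => |f' x| ^ q := by
    refine quasiconvexOn_iff_le_max.2 ⟨convex_Icc a b, fun x hx y hy α β hα hβ hαβ => ?_⟩
    simpa [← hαβ] using hqc x hx y hy α ⟨hα, by linarith⟩
  have hm : (a + b) / 2 ∈ Icc a b := ⟨by linarith, by linarith⟩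
  have hbound := abs_simpson_error_le hab
    (fun x hx => hf x ⟨hca.trans_le hx.1, hx.2.trans_lt hbd⟩) hint
    (fun x hx => abs_le_max_rpow_of_quasiconvexOn hq₀ hquasi hm (left_mem_Icc.2 hab.le)
      (segment_symm ℝ a _ ▸ Icc_subset_segment hx))
    (fun x hx => abs_le_max_rpow_of_quasiconvexOn hq₀ hquasi hm (right_mem_Icc.2 hab.le)
      (Icc_subset_segment hx))
  refine hbound.trans (mul_le_mul_of_nonneg_right ?_ (by positivity))
  exact mul_le_mul_of_nonneg_left (five_sixths_le_simpson_holder_const hp.le) (by linarith)
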